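/- arXiv:1603.07428 — 3 statements merged into one kernel-verified Lean document; each statement's English description precedes it below -/
import Mathlib

section
/- Let N ≥ 5 be an integer and a, b, A > 0 real numbers. If ((N-4)·b·A/2)^(2/(N-2)) · ((N-2)/(N-4)) · a^((N-4)/(N-2)) > 1, then the equation a·s² + b·A·s^(4-N) = 1 has no solution s > 0. -/
/-! The function `s ↦ a s² + b A s^(4-N)` attains its minimum
`((N-4) b A / 2)^(2/(N-2)) · (N-2)/(N-4) · a^((N-4)/(N-2))` on `s > 0`, so the equation has no
positive solution once this minimum exceeds `1`. The lower bound is weighted AM–GM with weights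
`(N-4)/(N-2)` and `2/(N-2)`, chosen so that the powers of `s` cancel in the geometric mean. -/

open Real

theorem le_mul_rpow_add_mul_rpow_neg {c d p q s : ℝ} (hc : 0 ≤ c) (hd : 0 ≤ d) (hp : 0 < p)
    (hq : 0 < q) (hs : 0 < s) :
    (q * d / p) ^ (p / (p + q)) * ((p + q) / q) * c ^ (q / (p + q)) ≤
      c * s ^ p + d * s ^ (-q) := by
  set k := (p + q) / q
  have hw : q / (p + q) + p / (p + q) = 1 := by field_simp; ring
  have amgm := geom_mean_le_arith_mean2_weighted (p₁ := k * c * s ^ p)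
    (p₂ := k * (q * d / p) * s ^ (-q)) (by positivity) (by positivity) (by positivity)
    (by positivity) hw
  have harith : q / (p + q) * (k * c * s ^ p) + p / (p + q) * (k * (q * d / p) * s ^ (-q)) =
      c * s ^ p + d * s ^ (-q) := by
    simp only [k]; field_simp
  have hs_cancel : (s ^ p) ^ (q / (p + q)) * (s ^ (-q)) ^ (p / (p + q)) = 1 := by
    rw [← rpow_mul hs.le, ← rpow_mul hs.le, ← rpow_add hs]
    convert rpow_zero s using 2
    ring
  have hk : k ^ (q / (p + q)) * k ^ (p / (p + q)) = k := by
    rw [← rpow_add (by positivity), hw, rpow_one]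
  have hgeom : (k * c * s ^ p) ^ (q / (p + q)) * (k * (q * d / p) * s ^ (-q)) ^ (p / (p + q)) =
      (q * d / p) ^ (p / (p + q)) * k * c ^ (q / (p + q)) := by
    rw [mul_rpow (by positivity) (by positivity), mul_rpow (by positivity) (by positivity),
      mul_rpow (by positivity) (by positivity), mul_rpow (by positivity) (by positivity)]
    calc k ^ (q / (p + q)) * c ^ (q / (p + q)) * (s ^ p) ^ (q / (p + q)) *
          (k ^ (p / (p + q)) * (q * d / p) ^ (p / (p + q)) * (s ^ (-q)) ^ (p / (p + q)))
        = (q * d / p) ^ (p / (p + q)) * (k ^ (q / (p + q)) * k ^ (p / (p + q))) *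
            c ^ (q / (p + q)) * ((s ^ p) ^ (q / (p + q)) * (s ^ (-q)) ^ (p / (p + q))) := by ring
      _ = _ := by rw [hk, hs_cancel, mul_one]
  rwa [hgeom, harith] at amgm

theorem stmt_2 (N : ℕ) (hN : 5 ≤ N) (a b A : ℝ) (ha : 0 < a) (hb : 0 < b) (hA : 0 < A)
    (hthr : 1 < (((N : ℝ) - 4) * b * A / 2) ^ ((2 : ℝ) / ((N : ℝ) - 2)) *
      (((N : ℝ) - 2) / ((N : ℝ) - 4)) * a ^ (((N : ℝ) - 4) / ((N : ℝ) - 2))) :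
    ¬ ∃ s : ℝ, 0 < s ∧ a * s ^ 2 + b * A * s ^ ((4 : ℤ) - N) = 1 := by
  rintro ⟨s, hs, heq⟩
  have hN' : (5 : ℝ) ≤ N := by exact_mod_cast hN
  have hpow : s ^ (-((N : ℝ) - 4)) = s ^ ((4 : ℤ) - N) := by
    rw [← rpow_intCast]; push_cast; ring_nf
  have key := le_mul_rpow_add_mul_rpow_neg ha.le (mul_pos hb hA).le two_pos
    (by linarith : (0 : ℝ) < N - 4) hs
  rw [show (2 : ℝ) + (N - 4) = N - 2 by ring, ← mul_assoc, rpow_two, hpow, heq] at key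
  linarith
end

section
/- Let N ≥ 5, and suppose positive reals A, B, C, a, b, λ, p with 2 < p < 2N/(N-2) satisfy the Pohozaev constraint ((N-2)/(2N))·(a·A + b·A²) + (λ/2)·C - (1/p)·B = 0 together with the Sobolev-type bound B ≤ S^(-2*(p-2)/(2(2*-2)))·C^((2*-p)/(2*-2))·A^(2*(p-2)/(2(2*-2))) where 2* = 2N/(N-2) and S > 0. Then A ≥ (((N-2)·a·p/(2N))·((λp/2)^((2*-p)/(p-2)))·S^(2*/2))^(2/(2*-2)) and A ≤ ((2N/((N-2)·b·p))·((2/(λp))^((2*-p)/(p-2)))·S^(-2*/2))^(2/(4-2*)). -/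
/-!
The Pohozaev identity writes `B / p` as a sum of three positive terms, so each of
`c a A`, `c b A²` (with `c = (N - 2) / (2N)`) and `λ C / 2` is at most `B / p`.
Feeding `C ≤ 2B / (λp)` into the interpolation bound gives `B ≲ B ^ σ A ^ θ` with
`σ = (2* - p) / (2* - 2) < 1`; absorbing `B ^ σ` yields `B ≲ A ^ (2*/2)`.
Since `1 < 2*/2 < 2` for `N ≥ 5`, comparing `B ≲ A ^ (2*/2)` with `a A ≲ B` bounds `A`
from below and comparing it with `b A² ≲ B` bounds `A` from above.
-/

open Real

lemma two_lt_two_mul_div_sub_two {n : ℝ} (hn : 2 < n) : 2 < 2 * n / (n - 2) := by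
  rw [lt_div_iff₀ (by linarith)]
  linarith

lemma two_mul_div_sub_two_lt_four {n : ℝ} (hn : 4 < n) : 2 * n / (n - 2) < 4 := by
  rw [div_lt_iff₀ (by linarith)]
  linarith

lemma le_rpow_of_le_mul_rpow {B K σ : ℝ} (hB : 0 < B) (hσ : σ < 1) (h : B ≤ K * B ^ σ) :
    B ≤ K ^ (1 - σ)⁻¹ := by
  have hK : 0 ≤ K := nonneg_of_mul_nonneg_left (hB.le.trans h) (rpow_pos_of_pos hB σ)
  rw [le_rpow_inv_iff_of_pos hB.le hK (by linarith), rpow_sub hB, rpow_one,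
    div_le_iff₀ (rpow_pos_of_pos hB σ)]
  exact h

lemma le_of_interpolation_of_le_mul {p q S K A B C : ℝ} (hp : 2 < p) (hpq : p < q)
    (hS : 0 ≤ S) (hK : 0 ≤ K) (hA : 0 ≤ A) (hB : 0 < B) (hC : 0 ≤ C) (hCB : C ≤ K * B)
    (hInt : B ≤ S ^ (-(q * (p - 2) / (2 * (q - 2)))) * C ^ ((q - p) / (q - 2)) *
      A ^ (q * (p - 2) / (2 * (q - 2)))) :
    B ≤ K ^ ((q - p) / (p - 2)) * S ^ (-(q / 2)) * A ^ (q / 2) := by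
  set θ := q * (p - 2) / (2 * (q - 2)) with hθ
  set σ := (q - p) / (q - 2) with hσdef
  have hq2 : 0 < q - 2 := by linarith
  have hσ : σ < 1 := by rw [div_lt_one hq2]; linarith
  have hB' : B ≤ (K ^ σ * S ^ (-θ) * A ^ θ) * B ^ σ := by
    have hCσ : C ^ σ ≤ K ^ σ * B ^ σ := by
      rw [← mul_rpow hK hB.le]
      exact rpow_le_rpow hC hCB (div_nonneg (by linarith) hq2.le)
    calc B ≤ S ^ (-θ) * C ^ σ * A ^ θ := hInt
      _ ≤ S ^ (-θ) * (K ^ σ * B ^ σ) * A ^ θ := by gcongr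
      _ = (K ^ σ * S ^ (-θ) * A ^ θ) * B ^ σ := by ring
  have hexp : (1 - σ)⁻¹ = (q - 2) / (p - 2) := by
    rw [show 1 - σ = (p - 2) / (q - 2) by rw [hσdef]; field_simp; ring, inv_div]
  convert le_rpow_of_le_mul_rpow hB hσ hB' using 1
  rw [mul_rpow (by positivity) (by positivity), mul_rpow (by positivity) (by positivity),
    ← rpow_mul hK, ← rpow_mul hS, ← rpow_mul hA, hexp]
  have hp2 : p - 2 ≠ 0 := by linarith
  congr 3 <;> simp only [hθ, hσdef] <;> field_simp

lemma rpow_inv_le_of_mul_le_mul_rpow {A k M s : ℝ} (hA : 0 < A) (hk : 0 ≤ k) (hM : 0 < M)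
    (hs : 1 < s) (h : k * A ≤ M * A ^ s) : (k * M⁻¹) ^ (s - 1)⁻¹ ≤ A := by
  rw [rpow_inv_le_iff_of_pos (by positivity) hA.le (by linarith), rpow_sub_one hA.ne',
    le_div_iff₀ hA, mul_right_comm, ← div_eq_mul_inv, div_le_iff₀ hM, mul_comm (A ^ s)]
  exact h

lemma le_rpow_inv_of_mul_sq_le_mul_rpow {A k M s : ℝ} (hA : 0 < A) (hk : 0 < k) (hs : s < 2)
    (h : k * A ^ 2 ≤ M * A ^ s) : A ≤ (k⁻¹ * M) ^ (2 - s)⁻¹ := by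
  have hM : 0 ≤ M :=
    nonneg_of_mul_nonneg_left ((by positivity : 0 ≤ k * A ^ 2).trans h) (rpow_pos_of_pos hA s)
  rw [le_rpow_inv_iff_of_pos hA.le (by positivity) (by linarith), rpow_sub hA,
    div_le_iff₀ (rpow_pos_of_pos hA s), ← div_eq_inv_mul, div_mul_eq_mul_div,
    le_div_iff₀ hk, rpow_two, mul_comm]
  exact h

theorem stmt_11_general (N : ℕ) (hN : 5 ≤ N) (a b lam p S A B C : ℝ)
    (ha : 0 < a) (hb : 0 < b) (hlam : 0 < lam) (hS : 0 < S)
    (hA : 0 < A) (hC : 0 < C)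
    (hp2 : 2 < p) (hpc : p < 2 * N / ((N : ℝ) - 2))
    (hPoh : (((N : ℝ) - 2) / (2 * N)) * (a * A + b * A ^ 2) + (lam / 2) * C - (1 / p) * B = 0)
    (hSob : B ≤ S ^ (-((2 * N / ((N : ℝ) - 2)) * (p - 2) / (2 * (2 * N / ((N : ℝ) - 2) - 2)))) *
      C ^ ((2 * N / ((N : ℝ) - 2) - p) / (2 * N / ((N : ℝ) - 2) - 2)) *
      A ^ ((2 * N / ((N : ℝ) - 2)) * (p - 2) / (2 * (2 * N / ((N : ℝ) - 2) - 2)))) :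
    ((((N : ℝ) - 2) * a * p / (2 * N) * (lam * p / 2) ^ ((2 * N / ((N : ℝ) - 2) - p) / (p - 2)) *
        S ^ ((2 * N / ((N : ℝ) - 2)) / 2)) ^ ((2 : ℝ) / (2 * N / ((N : ℝ) - 2) - 2)) ≤ A) ∧
    (A ≤ ((2 * N / (((N : ℝ) - 2) * b * p)) * ((2 / (lam * p)) ^ ((2 * N / ((N : ℝ) - 2) - p) / (p - 2))) *
        S ^ (-((2 * N / ((N : ℝ) - 2)) / 2))) ^ ((2 : ℝ) / (4 - 2 * N / ((N : ℝ) - 2)))) := by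
  have hN5 : (5 : ℝ) ≤ N := by exact_mod_cast hN
  set q : ℝ := 2 * N / ((N : ℝ) - 2)
  have hq2 : 2 < q := two_lt_two_mul_div_sub_two (by linarith)
  have hq4 : q < 4 := two_mul_div_sub_two_lt_four (by linarith)
  have hp : 0 < p := by linarith
  have hN2 : (0 : ℝ) < N - 2 := by linarith
  set M := (2 / (lam * p)) ^ ((q - p) / (p - 2)) * S ^ (-(q / 2))
  have hM : 0 < M := by positivity
  have hPoh' : ((N - 2) * a * p / (2 * N)) * A + ((N - 2) * b * p / (2 * N)) * A ^ 2
      + (lam * p / 2) * C = B := by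
    field_simp at hPoh ⊢
    linarith
  have hka : 0 < (N - 2) * a * p / (2 * N) := by positivity
  have hkb : 0 < (N - 2) * b * p / (2 * N) := by positivity
  have haA := mul_pos hka hA
  have hbA := mul_pos hkb (pow_pos hA 2)
  have hlC : 0 < (lam * p / 2) * C := by positivity
  have hCB : C ≤ 2 / (lam * p) * B := by
    rw [div_mul_eq_mul_div, le_div_iff₀ (by positivity)]
    linarith
  have hBA : B ≤ M * A ^ (q / 2) :=
    le_of_interpolation_of_le_mul hp2 hpc hS.le (by positivity) hA.le (by linarith) hC.le hCB hSob
  constructor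
  · convert rpow_inv_le_of_mul_le_mul_rpow hA hka.le hM (s := q / 2) (by linarith)
      (by linarith) using 2
    · rw [mul_inv, ← inv_rpow (by positivity), inv_div, ← rpow_neg hS.le, neg_neg, mul_assoc]
    · field_simp
  · convert le_rpow_inv_of_mul_sq_le_mul_rpow hA hkb (M := M) (s := q / 2) (by linarith)
      (by linarith) using 2
    · rw [inv_div, mul_assoc]
    · field_simp; ring

theorem stmt_11 (N : ℕ) (hN : 5 ≤ N) (a b lam p S A B C : ℝ)
    (ha : 0 < a) (hb : 0 < b) (hlam : 0 < lam) (hS : 0 < S)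
    (hA : 0 < A) (hB : 0 < B) (hC : 0 < C)
    (hp2 : 2 < p) (hpc : p < 2 * N / ((N : ℝ) - 2))
    (hPoh : (((N : ℝ) - 2) / (2 * N)) * (a * A + b * A ^ 2) + (lam / 2) * C - (1 / p) * B = 0)
    (hSob : B ≤ S ^ (-((2 * N / ((N : ℝ) - 2)) * (p - 2) / (2 * (2 * N / ((N : ℝ) - 2) - 2)))) *
      C ^ ((2 * N / ((N : ℝ) - 2) - p) / (2 * N / ((N : ℝ) - 2) - 2)) *
      A ^ ((2 * N / ((N : ℝ) - 2)) * (p - 2) / (2 * (2 * N / ((N : ℝ) - 2) - 2)))) :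
    ((((N : ℝ) - 2) * a * p / (2 * N) * (lam * p / 2) ^ ((2 * N / ((N : ℝ) - 2) - p) / (p - 2)) *
        S ^ ((2 * N / ((N : ℝ) - 2)) / 2)) ^ ((2 : ℝ) / (2 * N / ((N : ℝ) - 2) - 2)) ≤ A) ∧
    (A ≤ ((2 * N / (((N : ℝ) - 2) * b * p)) * ((2 / (lam * p)) ^ ((2 * N / ((N : ℝ) - 2) - p) / (p - 2))) *
        S ^ (-((2 * N / ((N : ℝ) - 2)) / 2))) ^ ((2 : ℝ) / (4 - 2 * N / ((N : ℝ) - 2)))) :=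
  stmt_11_general N hN a b lam p S A B C ha hb hlam hS hA hC hp2 hpc hPoh hSob
end

section
/- Let N ≥ 5 and a, b, A > 0 with ((N-4)·b·A/2)^(2/(N-2)) · ((N-2)/(N-4)) · a^((N-4)/(N-2)) = 1. Then s₀ = ((N-4)·b·A/(2a))^(1/(N-2)) is the unique positive solution of a·s² + b·A·s^(4-N) = 1, and moreover at s₀ one has 2a·s₀ = (N-4)·b·A·s₀^(3-N) (the derivative condition for a double root). -/
/-!
Write `B = b·A`, `k = N - 4` and `f(s) = a·s² + B·s^(-k)`. The point `s₀` is exactly the critical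
point of `f`, i.e. `k·B = 2a·s₀^(k+2)`, and the threshold condition says `f(s₀) = (k+2)/k · a·s₀² = 1`.
The tangent line of the convex function `t ↦ t^(-k)` at `t = 1` gives `f(s) - f(s₀) ≥ a·(s - s₀)²`,
so `s₀` is the only positive solution of `f(s) = 1`.
-/

open Real

noncomputable def kirchhoffScale (a B : ℝ) (k : ℕ) (s : ℝ) : ℝ := a * s ^ 2 + B * s ^ (-(k : ℤ))

theorem one_sub_mul_le_zpow_neg (k : ℕ) {t : ℝ} (ht : 0 < t) :
    1 - k * (t - 1) ≤ t ^ (-(k : ℤ)) := by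
  have hbernoulli := one_add_mul_le_pow (a := t⁻¹ - 1) (by linarith [inv_pos.2 ht]) k
  rw [add_sub_cancel] at hbernoulli
  have hinv : 1 - t ≤ t⁻¹ - 1 := by
    have : t⁻¹ - 1 - (1 - t) = (t - 1) ^ 2 / t := by field_simp; ring
    linarith [div_nonneg (sq_nonneg (t - 1)) ht.le]
  rw [zpow_neg, zpow_natCast, ← inv_pow]
  calc 1 - k * (t - 1) = 1 + k * (1 - t) := by ring
    _ ≤ 1 + k * (t⁻¹ - 1) := by gcongr
    _ ≤ t⁻¹ ^ k := hbernoulli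

theorem mul_rpow_two_div_mul_rpow {a c q : ℝ} (ha : 0 < a) (hc : 0 < c) (hq : q + 2 ≠ 0) :
    (a * c) ^ (2 / (q + 2)) * a ^ (q / (q + 2)) = a * (c ^ (1 / (q + 2))) ^ 2 := by
  have hc2 : c ^ (2 / (q + 2)) = (c ^ (1 / (q + 2))) ^ 2 := by
    rw [← rpow_natCast, ← rpow_mul hc.le]; ring_nf
  have ha1 : a ^ (2 / (q + 2)) * a ^ (q / (q + 2)) = a := by
    rw [← rpow_add ha, ← add_div, add_comm, div_self hq, rpow_one]
  rw [mul_rpow ha.le hc.le, ← hc2, mul_right_comm, ha1]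

section Critical

variable {a B s₀ : ℝ} {k : ℕ}

theorem kirchhoffScale_critical_value (hs₀ : s₀ ≠ 0) (hcrit : k * B = 2 * a * s₀ ^ (k + 2)) :
    k * kirchhoffScale a B k s₀ = (k + 2) * a * s₀ ^ 2 := by
  have : s₀ ^ (k + 2) * s₀ ^ (-(k : ℤ)) = s₀ ^ 2 := by
    rw [pow_add, zpow_neg, zpow_natCast]; field_simp
  unfold kirchhoffScale
  linear_combination s₀ ^ (-(k : ℤ)) * hcrit + 2 * a * this

theorem sq_sub_le_kirchhoffScale_sub (hk : 0 < k) (ha : 0 ≤ a) (hs₀ : 0 < s₀) {s : ℝ} (hs : 0 < s)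
    (hcrit : k * B = 2 * a * s₀ ^ (k + 2)) :
    a * (s - s₀) ^ 2 ≤ kirchhoffScale a B k s - kirchhoffScale a B k s₀ := by
  have hval := kirchhoffScale_critical_value hs₀.ne' hcrit
  have htangent := one_sub_mul_le_zpow_neg k (div_pos hs hs₀)
  have hscale : k * B * s ^ (-(k : ℤ)) = 2 * a * s₀ ^ 2 * (s / s₀) ^ (-(k : ℤ)) := by
    rw [div_zpow, hcrit, pow_add, zpow_neg, zpow_neg, zpow_natCast, zpow_natCast]
    field_simp
  have hkpos : (0 : ℝ) < k := Nat.cast_pos.2 hk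
  refine le_of_mul_le_mul_left ?_ hkpos
  have hlower : 2 * a * s₀ ^ 2 * (1 - k * (s / s₀ - 1)) ≤ k * B * s ^ (-(k : ℤ)) :=
    hscale ▸ mul_le_mul_of_nonneg_left htangent (by positivity)
  have hexpand : 2 * a * s₀ ^ 2 * (1 - k * (s / s₀ - 1)) =
      2 * a * s₀ ^ 2 - 2 * k * a * s₀ * (s - s₀) := by
    field_simp
  rw [mul_sub, hval]
  unfold kirchhoffScale
  linear_combination hlower - hexpand

theorem eq_of_kirchhoffScale_eq (hk : 0 < k) (ha : 0 < a) (hs₀ : 0 < s₀) {s : ℝ} (hs : 0 < s)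
    (hcrit : k * B = 2 * a * s₀ ^ (k + 2))
    (heq : kirchhoffScale a B k s = kirchhoffScale a B k s₀) : s = s₀ := by
  have hgrowth := sq_sub_le_kirchhoffScale_sub hk ha.le hs₀ hs hcrit
  rw [heq, sub_self] at hgrowth
  have hsq : (s - s₀) ^ 2 = 0 :=
    le_antisymm (nonpos_of_mul_nonpos_right hgrowth ha) (sq_nonneg _)
  exact sub_eq_zero.1 (pow_eq_zero_iff two_ne_zero |>.1 hsq)

theorem critical_of_eq_rpow (ha : a ≠ 0) (hc : 0 ≤ k * B / (2 * a))
    (hs₀ : s₀ = (k * B / (2 * a)) ^ (1 / ((k : ℝ) + 2))) : k * B = 2 * a * s₀ ^ (k + 2) := by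
  have hpow : s₀ ^ (k + 2) = k * B / (2 * a) := by
    rw [hs₀, one_div, show (k : ℝ) + 2 = ((k + 2 : ℕ) : ℝ) by push_cast; ring]
    exact rpow_inv_natCast_pow hc (by omega)
  rw [hpow]; field_simp

theorem kirchhoffScale_eq_one_of_threshold (hk : 0 < k) (ha : 0 < a) (hc : 0 < k * B / (2 * a))
    (hthr : (k * B / 2) ^ (2 / ((k : ℝ) + 2)) * ((k + 2) / k) * a ^ ((k : ℝ) / (k + 2)) = 1)
    (hs₀ : s₀ = (k * B / (2 * a)) ^ (1 / ((k : ℝ) + 2))) : kirchhoffScale a B k s₀ = 1 := by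
  have hthreshold : (k + 2) * a * s₀ ^ 2 = k := by
    rw [show (k : ℝ) * B / 2 = a * (k * B / (2 * a)) by field_simp, mul_right_comm,
      mul_rpow_two_div_mul_rpow ha hc (by positivity), ← hs₀] at hthr
    field_simp at hthr
    linear_combination hthr
  have hs₀pos : 0 < s₀ := hs₀ ▸ rpow_pos_of_pos hc _
  have hvalue := kirchhoffScale_critical_value hs₀pos.ne' (critical_of_eq_rpow ha.ne' hc.le hs₀)
  rw [hthreshold] at hvalue
  exact (mul_eq_left₀ (by positivity)).1 hvalue

end Critical

theorem stmt_19 (N : ℕ) (hN : 5 ≤ N) (a b A : ℝ) (ha : 0 < a) (hb : 0 < b) (hA : 0 < A)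
    (hthr : (((N : ℝ) - 4) * b * A / 2) ^ ((2 : ℝ) / ((N : ℝ) - 2)) *
      (((N : ℝ) - 2) / ((N : ℝ) - 4)) * a ^ (((N : ℝ) - 4) / ((N : ℝ) - 2)) = 1)
    (s₀ : ℝ) (hs₀ : s₀ = (((N : ℝ) - 4) * b * A / (2 * a)) ^ ((1 : ℝ) / ((N : ℝ) - 2))) :
    (0 < s₀) ∧ a * s₀ ^ 2 + b * A * s₀ ^ ((4 : ℤ) - N) = 1 ∧
      (∀ s : ℝ, 0 < s → a * s ^ 2 + b * A * s ^ ((4 : ℤ) - N) = 1 → s = s₀) ∧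
      2 * a * s₀ = ((N : ℝ) - 4) * b * A * s₀ ^ ((3 : ℤ) - N) := by
  obtain ⟨k, rfl⟩ : ∃ k, N = k + 4 := ⟨N - 4, by omega⟩
  have hk : 0 < k := by omega
  have hk4 : ((k + 4 : ℕ) : ℝ) - 4 = k := by push_cast; ring
  have hk2 : ((k + 4 : ℕ) : ℝ) - 2 = k + 2 := by push_cast; ring
  have hexp4 : (4 : ℤ) - ((k + 4 : ℕ) : ℤ) = -(k : ℤ) := by push_cast; ring
  have hexp3 : (3 : ℤ) - ((k + 4 : ℕ) : ℤ) = -(k : ℤ) - 1 := by push_cast; ring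
  rw [hk4, hk2, mul_assoc (k : ℝ) b A] at hthr hs₀
  rw [hk4, hexp4, hexp3, mul_assoc (k : ℝ) b A]
  have hc : 0 < k * (b * A) / (2 * a) := by positivity
  have hs₀pos : 0 < s₀ := hs₀ ▸ rpow_pos_of_pos hc _
  have hcrit := critical_of_eq_rpow ha.ne' hc.le hs₀
  have hvalue := kirchhoffScale_eq_one_of_threshold hk ha hc hthr hs₀
  refine ⟨hs₀pos, hvalue, fun s hs hfs => ?_, ?_⟩
  · exact eq_of_kirchhoffScale_eq hk ha hs₀pos hs hcrit (hfs.trans hvalue.symm)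
  · rw [hcrit, zpow_sub₀ hs₀pos.ne', zpow_neg, zpow_natCast, zpow_one]
    field_simp
    ring
end
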